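/- arXiv:1412.8096 — 6 statements merged into one kernel-verified Lean document; each statement's English description precedes it below -/
import Mathlib

section
/- Let X be a complex Hilbert space, H : X → X a bounded self-adjoint operator, R : X → X a unitary operator with R³ = id and R∘H = H∘R, and A : X → X a conjugate-linear isometric involution with A∘H = H∘A and A∘R = R∘A. Then for every real number λ, the map A restricts to a bijection from {x ∈ X : Hx = λx and Rx = τx} onto {x ∈ X : Hx = λx and Rx = conj(τ)x}. In particular, if there exists a nonzero x with Hx = λx and Rx = τx, then the eigenspace ker(H − λ·id) has complex dimension at least 2. -/
open ComplexConjugate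

noncomputable def tau : ℂ := Complex.exp (2 * (Real.pi : ℂ) * Complex.I / 3)

lemma tau_ne_conj : tau ≠ conj tau := by
  have h1 : tau = Complex.exp ((2 * Real.pi / 3 : ℝ) * Complex.I) := by
    unfold tau; push_cast; ring_nf
  have him : tau.im = Real.sin (2 * Real.pi / 3) := by
    rw [h1, Complex.exp_ofReal_mul_I_im]
  have hsin : 0 < Real.sin (2 * Real.pi / 3) := by
    apply Real.sin_pos_of_pos_of_lt_pi
    · positivity
    · linarith [Real.pi_pos]
  intro h
  have h2 : tau.im = -tau.im := by
    conv_lhs => rw [h]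
    exact Complex.conj_im tau
  have : tau.im = 0 := by linarith
  rw [him] at this; linarith

/-- Double degeneracy at the Brillouin-zone corner for operators with rotation
symmetry `R` and an antiunitary symmetry `A` (inversion composed with complex
conjugation). -/
theorem stmt0 {X : Type*} [NormedAddCommGroup X] [InnerProductSpace ℂ X] [CompleteSpace X]
    (H : X →L[ℂ] X) (hH : IsSelfAdjoint H)
    (R : X ≃ₗᵢ[ℂ] X) (hR3 : ∀ x, R (R (R x)) = x)
    (hRH : ∀ x, R (H x) = H (R x))
    (A : X → X)
    (hAadd : ∀ x y, A (x + y) = A x + A y)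
    (hAsmul : ∀ (c : ℂ) (x : X), A (c • x) = (conj c) • A x)
    (hAisom : ∀ x, ‖A x‖ = ‖x‖)
    (hAinv : ∀ x, A (A x) = x)
    (hAH : ∀ x, A (H x) = H (A x))
    (hAR : ∀ x, A (R x) = R (A x)) :
    ∀ lam : ℝ,
      Set.BijOn A {x : X | H x = (lam : ℂ) • x ∧ R x = tau • x}
        {x : X | H x = (lam : ℂ) • x ∧ R x = (conj tau) • x} ∧
      ((∃ x : X, x ≠ 0 ∧ H x = (lam : ℂ) • x ∧ R x = tau • x) →
        2 ≤ Module.rank ℂ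
          (LinearMap.ker ((H : X →ₗ[ℂ] X) - (lam : ℂ) • LinearMap.id))) := by
  intro lam
  have hHA : ∀ x : X, H x = (lam : ℂ) • x → H (A x) = (lam : ℂ) • A x := by
    intro x h1
    rw [← hAH, h1, hAsmul, Complex.conj_ofReal]
  have hRA : ∀ x : X, R x = tau • x → R (A x) = conj tau • A x := by
    intro x h2
    rw [← hAR, h2, hAsmul]
  have hRA' : ∀ x : X, R x = conj tau • x → R (A x) = tau • A x := by
    intro x h2
    rw [← hAR, h2, hAsmul, Complex.conj_conj]
  have hAne : ∀ x : X, x ≠ 0 → A x ≠ 0 := by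
    intro x hx h
    apply hx
    have := hAisom x
    rw [h, norm_zero] at this
    exact norm_eq_zero.mp this.symm
  constructor
  · refine ⟨?_, ?_, ?_⟩
    · rintro x ⟨h1, h2⟩
      exact ⟨hHA x h1, hRA x h2⟩
    · intro x _ y _ h
      rw [← hAinv x, h, hAinv]
    · rintro y ⟨h1, h2⟩
      exact ⟨A y, ⟨hHA y h1, hRA' y h2⟩, hAinv y⟩
  · rintro ⟨x, hx0, h1, h2⟩
    set K := LinearMap.ker ((H : X →ₗ[ℂ] X) - (lam : ℂ) • LinearMap.id) with hK
    have hxK : x ∈ K := by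
      simp [hK, LinearMap.mem_ker, sub_eq_zero, h1]
    have hAxK : A x ∈ K := by
      simp [hK, LinearMap.mem_ker, sub_eq_zero, hHA x h1]
    set u : K := ⟨x, hxK⟩ with hu
    set v : K := ⟨A x, hAxK⟩ with hv
    have hli : LinearIndependent ℂ ![u, v] := by
      rw [LinearIndependent.pair_iff]
      intro s t hst
      have hst' : s • x + t • A x = 0 := by
        have := congrArg (Subtype.val : K → X) hst
        simpa [hu, hv] using this
      have h3 : R (A x) = conj tau • A x := hRA x h2
      have h4 : (s * tau) • x + (t * conj tau) • A x = 0 := by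
        have := congrArg R hst'
        simp only [map_add, map_smul, h2, h3, map_zero, smul_smul] at this
        exact this
      have h5 : (conj tau * s) • x + (conj tau * t) • A x = 0 := by
        rw [mul_smul, mul_smul, ← smul_add, hst', smul_zero]
      have h6 : (s * (tau - conj tau)) • x = 0 := by
        have heq : (s * (tau - conj tau)) • x =
            ((s * tau) • x + (t * conj tau) • A x) -
            ((conj tau * s) • x + (conj tau * t) • A x) := by
          module
        rw [heq, h4, h5, sub_zero]
      have hs : s = 0 := by
        rcases smul_eq_zero.mp h6 with h | h
        · rcases mul_eq_zero.mp h with h | h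
          · exact h
          · exact absurd (sub_eq_zero.mp h) tau_ne_conj
        · exact absurd h hx0
      refine ⟨hs, ?_⟩
      rw [hs, zero_smul, zero_add] at hst'
      rcases smul_eq_zero.mp hst' with h | h
      · exact h
      · exact absurd h (hAne x hx0)
    have := hli.cardinal_lift_le_rank
    simpa using this
end

section
/- Let X be a complex Hilbert space, H : X → X a bounded self-adjoint operator, R : X → X a unitary operator with R³ = id and R∘H = H∘R, and F : X → X a unitary operator with F² = id, F∘H = H∘F, and F∘R∘F = R∘R (equivalently F R F⁻¹ = R⁻¹). Then for every complex λ, the map F restricts to a bijection from {x ∈ X : Hx = λx and Rx = τx} onto {x ∈ X : Hx = λx and Rx = conj(τ)x}. In particular, if there exists a nonzero x with Hx = λx and Rx = τx, then the eigenspace ker(H − λ·id) has complex dimension at least 2. -/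
open ComplexConjugate

lemma tau_pow3 : tau ^ 3 = 1 := by
  rw [tau, ← Complex.exp_nat_mul]
  norm_num
  rw [show ((3:ℂ) * (2 * (Real.pi : ℂ) * Complex.I / 3)) = 2 * Real.pi * Complex.I by ring]
  exact Complex.exp_two_pi_mul_I

lemma conj_tau : conj tau = tau ^ 2 := by
  rw [tau, ← Complex.exp_conj]
  have h1 : conj (2 * (Real.pi : ℂ) * Complex.I / 3) = -(2 * (Real.pi : ℂ) * Complex.I / 3) := by
    simp only [map_div₀, map_mul, map_ofNat, Complex.conj_ofReal, Complex.conj_I]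
    ring
  rw [h1]
  rw [show (Complex.exp (2 * (Real.pi : ℂ) * Complex.I / 3))^2 = Complex.exp (2 * (2 * (Real.pi : ℂ) * Complex.I / 3)) by rw [← Complex.exp_nat_mul]; norm_num]
  rw [show (2:ℂ) * (2 * (Real.pi : ℂ) * Complex.I / 3) = -(2 * (Real.pi : ℂ) * Complex.I / 3) + 2 * Real.pi * Complex.I by ring]
  rw [Complex.exp_add, Complex.exp_two_pi_mul_I, mul_one]

lemma conj_tau_sq : (conj tau) ^ 2 = tau := by
  rw [conj_tau, ← pow_mul]
  have : tau ^ 4 = tau ^ 3 * tau := by ring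
  rw [show 2 * 2 = 4 by norm_num, this, tau_pow3, one_mul]

lemma tau_im_pos : 0 < tau.im := by
  rw [tau, Complex.exp_im]
  have hre : (2 * (Real.pi : ℂ) * Complex.I / 3).re = 0 := by simp
  have him : (2 * (Real.pi : ℂ) * Complex.I / 3).im = 2 * Real.pi / 3 := by simp
  rw [hre, him, Real.exp_zero, one_mul]
  apply Real.sin_pos_of_pos_of_lt_pi
  · positivity
  · nlinarith [Real.pi_pos]

/-- Double degeneracy at the Brillouin-zone corner for operators with rotation
symmetry `R` and a horizontal reflection symmetry `F` (with `F R F⁻¹ = R⁻¹`). -/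
theorem stmt1 {X : Type*} [NormedAddCommGroup X] [InnerProductSpace ℂ X] [CompleteSpace X]
    (H : X →L[ℂ] X) (hH : IsSelfAdjoint H)
    (R : X ≃ₗᵢ[ℂ] X) (hR3 : ∀ x, R (R (R x)) = x)
    (hRH : ∀ x, R (H x) = H (R x))
    (F : X ≃ₗᵢ[ℂ] X) (hF2 : ∀ x, F (F x) = x)
    (hFH : ∀ x, F (H x) = H (F x))
    (hFRF : ∀ x, F (R (F x)) = R (R x)) :
    ∀ lam : ℂ,
      Set.BijOn F {x : X | H x = lam • x ∧ R x = tau • x}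
        {x : X | H x = lam • x ∧ R x = (conj tau) • x} ∧
      ((∃ x : X, x ≠ 0 ∧ H x = lam • x ∧ R x = tau • x) →
        2 ≤ Module.rank ℂ
          (LinearMap.ker ((H : X →ₗ[ℂ] X) - lam • LinearMap.id))) := by
  intro lam
  -- R (F x) computed from the relation F R F = R²
  have keyR : ∀ x : X, R (F x) = F (R (R x)) := by
    intro x
    have h2 : F (F (R (F x))) = F (R (R x)) := by rw [hFRF]
    rw [hF2] at h2
    exact h2
  have keyA : ∀ x : X, R x = tau • x → R (F x) = conj tau • F x := by
    intro x hx
    calc R (F x) = F (R (R x)) := keyR x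
      _ = conj tau • F x := by
        rw [hx, map_smul, hx, smul_smul, map_smul, conj_tau, sq]
  have keyB : ∀ x : X, R x = conj tau • x → R (F x) = tau • F x := by
    intro x hx
    calc R (F x) = F (R (R x)) := keyR x
      _ = tau • F x := by
        rw [hx, map_smul, hx, smul_smul, map_smul,
          show conj tau * conj tau = tau by rw [← sq]; exact conj_tau_sq]
  have hHF : ∀ x : X, H x = lam • x → H (F x) = lam • F x := by
    intro x hx
    rw [← hFH, hx, map_smul]
  constructor
  · refine ⟨?_, F.injective.injOn, ?_⟩
    · rintro x ⟨hx1, hx2⟩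
      exact ⟨hHF x hx1, keyA x hx2⟩
    · rintro y ⟨hy1, hy2⟩
      exact ⟨F y, ⟨hHF y hy1, keyB y hy2⟩, hF2 y⟩
  · rintro ⟨x, hx0, hx1, hx2⟩
    set K := LinearMap.ker ((H : X →ₗ[ℂ] X) - lam • LinearMap.id) with hK
    have memK : ∀ z : X, H z = lam • z → z ∈ K := by
      intro z hz
      simp only [hK, LinearMap.mem_ker, LinearMap.sub_apply, LinearMap.smul_apply,
        LinearMap.id_apply, ContinuousLinearMap.coe_coe, hz, sub_self]
    have hy2 : R (F x) = conj tau • F x := keyA x hx2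
    have hy0 : F x ≠ 0 := fun h => hx0 (F.injective (by simp [h]))
    -- linear independence of x and F x in X
    have hli : LinearIndependent ℂ ![x, F x] := by
      rw [linearIndependent_fin2]
      refine ⟨by simpa using hy0, ?_⟩
      intro a ha
      simp only [Matrix.cons_val_one, Matrix.head_cons, Matrix.cons_val_zero] at ha
      -- ha : a • F x = x
      have h1 : a • (conj tau • F x) = tau • (a • F x) := by
        rw [← hy2, ← map_smul, ha, hx2]
      rw [smul_smul, smul_smul] at h1
      have h2 : (a * conj tau - tau * a) • F x = 0 := by
        rw [sub_smul, h1, sub_self]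
      rcases smul_eq_zero.mp h2 with h3 | h3
      · have ha0 : a = 0 := by
          by_contra ha0
          have : conj tau = tau := by
            have h4 : a * (conj tau - tau) = 0 := by linear_combination h3
            rcases mul_eq_zero.mp h4 with h | h
            · exact absurd h ha0
            · exact sub_eq_zero.mp h
          exact tau_ne_conj this.symm
        rw [ha0, zero_smul] at ha
        exact hx0 ha.symm
      · exact hy0 h3
    have hxK : x ∈ K := memK x hx1
    have hyK : F x ∈ K := memK (F x) (hHF x hx1)
    set v : Fin 2 → K := ![⟨x, hxK⟩, ⟨F x, hyK⟩] with hv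
    have hcomp : (K.subtype) ∘ v = ![x, F x] := by
      funext i
      fin_cases i <;> rfl
    have hliK : LinearIndependent ℂ v := by
      apply LinearIndependent.of_comp K.subtype
      rw [hcomp]
      exact hli
    have := hliK.cardinal_lift_le_rank
    simpa using this
end

section
/- Let τ = e^{2πi/3}, D = diag(τ, conj(τ)) ∈ M₂(ℂ), and σₓ = [[0,1],[1,0]]. Suppose h₁, h₂ ∈ M₂(ℂ) are Hermitian matrices satisfying D h₁ D* = −h₁ − h₂, D h₂ D* = h₁, and additionally conj(σₓ hⱼ σₓ) = −hⱼ for j = 1, 2, where conj denotes entrywise complex conjugation. Then h₁ = h₂ = 0. -/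
open Matrix ComplexConjugate

noncomputable def D : Matrix (Fin 2) (Fin 2) ℂ := !![tau, 0; 0, conj tau]

def sigmaX : Matrix (Fin 2) (Fin 2) ℂ := !![0, 1; 1, 0]

/-- At the quasimomentum point `k = 0`, rotation equivariance together with the
time-reversal relation forces the first-order derivative matrices to vanish,
so the dispersion relation is locally flat there. -/
theorem stmt4 (h₁ h₂ : Matrix (Fin 2) (Fin 2) ℂ)
    (hh₁ : h₁.IsHermitian) (hh₂ : h₂.IsHermitian)
    (hr1 : D * h₁ * Dᴴ = -h₁ - h₂)
    (hr2 : D * h₂ * Dᴴ = h₁)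
    (hc1 : (sigmaX * h₁ * sigmaX).map (starRingEnd ℂ) = -h₁)
    (hc2 : (sigmaX * h₂ * sigmaX).map (starRingEnd ℂ) = -h₂) :
    h₁ = 0 ∧ h₂ = 0 := by
  have htau : tau * conj tau = 1 := by
    rw [tau, ← Complex.exp_conj, ← Complex.exp_add]
    have : (2 * (Real.pi : ℂ) * Complex.I / 3) + conj (2 * (Real.pi : ℂ) * Complex.I / 3) = 0 := by
      simp only [map_div₀, _root_.map_mul, Complex.conj_I, Complex.conj_ofReal, map_ofNat]
      ring
    rw [this, Complex.exp_zero]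
  -- herm entries
  have herm1 : ∀ i j, conj (h₁ j i) = h₁ i j := fun i j => hh₁.apply i j
  have herm2 : ∀ i j, conj (h₂ j i) = h₂ i j := fun i j => hh₂.apply i j
  -- off-diagonal from hc
  have e1 := congrFun (congrFun hc1 0) 1
  have e2 := congrFun (congrFun hc2 0) 1
  have e3 := congrFun (congrFun hc1 0) 0
  have e4 := congrFun (congrFun hc1 1) 1
  have e5 := congrFun (congrFun hc2 0) 0
  have e6 := congrFun (congrFun hc2 1) 1
  simp [sigmaX, Matrix.mul_apply, Fin.sum_univ_two, Matrix.vecMul, dotProduct] at e1 e2 e3 e4 e5 e6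
  rw [herm1 0 1] at e1
  rw [herm2 0 1] at e2
  have h1od : h₁ 0 1 = 0 := by linear_combination (1/2 : ℂ) * e1
  have h2od : h₂ 0 1 = 0 := by linear_combination (1/2 : ℂ) * e2
  have h1od' : h₁ 1 0 = 0 := by rw [← herm1 1 0, h1od, map_zero]
  have h2od' : h₂ 1 0 = 0 := by rw [← herm2 1 0, h2od, map_zero]
  -- diagonal
  have d1 := congrFun (congrFun hr1 0) 0
  have d2 := congrFun (congrFun hr2 0) 0
  simp [D, Matrix.mul_apply, Fin.sum_univ_two, Matrix.conjTranspose_apply, Matrix.vecMul, dotProduct] at d1 d2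
  have k1 : h₁ 0 0 = -h₁ 0 0 - h₂ 0 0 := by
    rw [← d1]; linear_combination -(h₁ 0 0) * htau
  have k2 : h₂ 0 0 = h₁ 0 0 := by
    rw [← d2]; linear_combination -(h₂ 0 0) * htau
  have z1 : h₁ 0 0 = 0 := by linear_combination (1/3 : ℂ) * k1 - (1/3 : ℂ) * k2
  have z2 : h₂ 0 0 = 0 := by rw [k2, z1]
  -- (1,1) entries via hc diagonal: conj (h 1 1) = - h 0 0
  rw [z1, map_zero] at e4
  rw [z2, map_zero] at e6
  have z3 : h₁ 1 1 = 0 := by linear_combination e4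
  have z4 : h₂ 1 1 = 0 := by linear_combination e6
  constructor <;> ext i j <;> fin_cases i <;> fin_cases j <;>
    simp [z1, z2, z3, z4, h1od, h2od, h1od', h2od']
end

section
/- Let X be a 2-dimensional complex inner product space and A a conjugate-linear isometric involution on X. Let ψ⁺, ψ⁻ : ℝ → X be continuous functions such that for every θ ∈ ℝ: ‖ψ⁺(θ)‖ = ‖ψ⁻(θ)‖ = 1, A(ψ⁺(θ)) = ψ⁺(θ), A(ψ⁻(θ)) = ψ⁻(θ), ⟨ψ⁺(θ), ψ⁻(θ)⟩ = 0, and ψ⁺(θ + π) = ψ⁻(θ) or ψ⁺(θ + π) = −ψ⁻(θ). Then ψ⁺(θ + 2π) = −ψ⁺(θ) for all θ ∈ ℝ. -/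
/-!
The vectors fixed by `A` have real inner products with each other, so `θ ↦ (ψ⁺ θ, ψ⁻ θ)` is a
continuous orthonormal frame of a real Euclidean plane, and its orientation relative to
`(ψ⁺ 0, ψ⁻ 0)` is a continuous sign, hence constantly `1`. Write `ψ⁺ (θ + π) = s ψ⁻ θ`;
in dimension two, `ψ⁻ (θ + π) ⊥ ψ⁻ θ` forces `ψ⁻ (θ + π) = t ψ⁺ θ` with `t` real. The frame
`(s ψ⁻ θ, t ψ⁺ θ)` has orientation `-s t`, so `s t = -1`. The sign `s` is continuous, hence
constant, and `ψ⁺ (θ + 2π) = s t ψ⁺ θ = -ψ⁺ θ`.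
-/

open ComplexConjugate

theorem Continuous.apply_eq_of_sq_eq_one {α R : Type*} [TopologicalSpace α] [PreconnectedSpace α]
    [TopologicalSpace R] [T1Space R] [Ring R] [NoZeroDivisors R] {f : α → R}
    (hf : Continuous f) (hsq : ∀ x, f x ^ 2 = 1) (x y : α) : f x = f y := by
  rcases isPreconnected_univ.eq_one_or_eq_neg_one_of_sq_eq hf.continuousOn
    (fun z _ => hsq z) with h | h <;>
  simp [h (Set.mem_univ x), h (Set.mem_univ y)]

section Orthonormal

variable {𝕜 E ι : Type*} [RCLike 𝕜] [NormedAddCommGroup E] [InnerProductSpace 𝕜 E]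
  [Fintype ι] [Nonempty ι] {v : ι → E}

noncomputable def Orthonormal.toOrthonormalBasis (hv : Orthonormal 𝕜 v)
    (hcard : Fintype.card ι = Module.finrank 𝕜 E) : OrthonormalBasis ι 𝕜 E :=
  OrthonormalBasis.mk hv (hv.linearIndependent.span_eq_top_of_card_eq_finrank hcard).ge

theorem Orthonormal.sum_inner_smul_of_card_eq_finrank (hv : Orthonormal 𝕜 v)
    (hcard : Fintype.card ι = Module.finrank 𝕜 E) (x : E) :
    ∑ i, inner 𝕜 (v i) x • v i = x := by
  simpa [Orthonormal.toOrthonormalBasis] using (hv.toOrthonormalBasis hcard).sum_repr' x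

theorem Orthonormal.sum_inner_mul_inner_of_card_eq_finrank (hv : Orthonormal 𝕜 v)
    (hcard : Fintype.card ι = Module.finrank 𝕜 E) (x y : E) :
    ∑ i, inner 𝕜 x (v i) * inner 𝕜 (v i) y = inner 𝕜 x y := by
  simpa [Orthonormal.toOrthonormalBasis] using (hv.toOrthonormalBasis hcard).sum_inner_mul_inner x y

end Orthonormal

theorem orthonormal_pair {𝕜 E : Type*} [RCLike 𝕜] [NormedAddCommGroup E] [InnerProductSpace 𝕜 E]
    {u v : E} (hu : ‖u‖ = 1) (hv : ‖v‖ = 1) (huv : inner 𝕜 u v = 0) : Orthonormal 𝕜 ![u, v] := by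
  simp [hu, hv, huv]

section ComplexPlane

variable {X : Type*} [NormedAddCommGroup X] [InnerProductSpace ℂ X]

theorem im_inner_eq_zero_of_conjLinear_isometry {A : X → X}
    (hAadd : ∀ x y, A (x + y) = A x + A y) (hAsmul : ∀ (c : ℂ) (x : X), A (c • x) = conj c • A x)
    (hAisom : ∀ x, ‖A x‖ = ‖x‖) {x y : X} (hx : A x = x) (hy : A y = y) :
    (inner ℂ x y).im = 0 := by
  have h : ‖x - Complex.I • y‖ = ‖x + Complex.I • y‖ := by
    rw [← hAisom (x + Complex.I • y), hAadd, hAsmul, hx, hy, Complex.conj_I, neg_smul, sub_eq_add_neg]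
  have := im_inner_eq_norm_sub_i_smul_mul_self_sub_norm_add_i_smul_mul_self_div_four (𝕜 := ℂ) x y
  simpa [h] using this

theorem eq_re_inner_smul_and_sq_eq_one_of_eq_or_eq_neg {x y : X} (hy : ‖y‖ = 1)
    (h : x = y ∨ x = -y) : x = ((inner ℂ y x).re : ℂ) • y ∧ (inner ℂ y x).re ^ 2 = 1 := by
  rcases h with rfl | rfl <;> simp [inner_self_eq_norm_sq_to_K, hy]

/-- When `u, v` is an orthonormal basis and all inner products among `u, v, x, y` are real,
this is the orientation of the real frame `x, y` relative to `u, v`. -/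
noncomputable def reCoordDet (u v x y : X) : ℝ :=
  (inner ℂ u x).re * (inner ℂ v y).re - (inner ℂ v x).re * (inner ℂ u y).re

theorem reCoordDet_smul_smul (u v x y : X) (a b : ℝ) :
    reCoordDet u v ((a : ℂ) • x) ((b : ℂ) • y) = a * b * reCoordDet u v x y := by
  simp only [reCoordDet, inner_smul_right, Complex.re_ofReal_mul]
  ring

theorem reCoordDet_swap (u v x y : X) : reCoordDet u v y x = -reCoordDet u v x y := by
  simp only [reCoordDet]
  ring

theorem reCoordDet_sq_add_re_inner_sq (hdim : Module.finrank ℂ X = 2) {u v x y : X}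
    (huv : Orthonormal ℂ ![u, v]) (hux : (inner ℂ u x).im = 0) (hvx : (inner ℂ v x).im = 0)
    (huy : (inner ℂ u y).im = 0) (hvy : (inner ℂ v y).im = 0) :
    reCoordDet u v x y ^ 2 + (inner ℂ x y).re ^ 2 = ‖x‖ ^ 2 * ‖y‖ ^ 2 := by
  have parseval : ∀ a b : X, inner ℂ a b = inner ℂ a u * inner ℂ u b + inner ℂ a v * inner ℂ v b :=
    fun a b => by
      simpa [Fin.sum_univ_two] using
        (huv.sum_inner_mul_inner_of_card_eq_finrank (by simp [hdim]) a b).symm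
  rw [← inner_self_eq_norm_sq (𝕜 := ℂ) x, ← inner_self_eq_norm_sq (𝕜 := ℂ) y,
    RCLike.re_to_complex, RCLike.re_to_complex, parseval x x, parseval y y, parseval x y]
  simp only [reCoordDet, ← inner_conj_symm x u, ← inner_conj_symm x v, ← inner_conj_symm y u,
    ← inner_conj_symm y v, Complex.add_re, Complex.mul_re, Complex.conj_re, Complex.conj_im, hux,
    hvx, huy, hvy]
  ring

theorem eq_re_inner_smul_of_inner_eq_zero (hdim : Module.finrank ℂ X = 2) {u v w : X}
    (huv : Orthonormal ℂ ![u, v]) (hvw : inner ℂ v w = 0) (huw : (inner ℂ u w).im = 0) :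
    w = ((inner ℂ u w).re : ℂ) • u := by
  have hexp := (huv.sum_inner_smul_of_card_eq_finrank (by simp [hdim]) w).symm
  rwa [Fin.sum_univ_two, Matrix.cons_val_zero, Matrix.cons_val_one, Matrix.cons_val_zero, hvw,
    zero_smul, add_zero, ← Complex.conj_eq_iff_re.mp (Complex.conj_eq_iff_im.mpr huw)] at hexp

theorem reCoordDet_eq_one_of_continuous {T : Type*} [TopologicalSpace T] [PreconnectedSpace T]
    (hdim : Module.finrank ℂ X = 2) {S : Set X}
    (hS : ∀ x ∈ S, ∀ y ∈ S, (inner ℂ x y).im = 0) {f g : T → X}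
    (hf : Continuous f) (hg : Continuous g) (hfS : ∀ t, f t ∈ S) (hgS : ∀ t, g t ∈ S)
    (hf1 : ∀ t, ‖f t‖ = 1) (hg1 : ∀ t, ‖g t‖ = 1) (hfg : ∀ t, inner ℂ (f t) (g t) = 0)
    (t₀ t : T) :
    reCoordDet (f t₀) (g t₀) (f t) (g t) = 1 := by
  have hsq : ∀ t, reCoordDet (f t₀) (g t₀) (f t) (g t) ^ 2 = 1 := by
    intro t
    have h := reCoordDet_sq_add_re_inner_sq hdim (orthonormal_pair (hf1 t₀) (hg1 t₀) (hfg t₀))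
      (hS _ (hfS t₀) _ (hfS t)) (hS _ (hgS t₀) _ (hfS t)) (hS _ (hfS t₀) _ (hgS t))
      (hS _ (hgS t₀) _ (hgS t))
    simpa [hf1, hg1, hfg] using h
  have hcont : Continuous fun t => reCoordDet (f t₀) (g t₀) (f t) (g t) := by
    unfold reCoordDet; fun_prop
  rw [hcont.apply_eq_of_sq_eq_one hsq t t₀]
  simp [reCoordDet, inner_self_eq_norm_sq_to_K, hf1, hg1, hfg]

end ComplexPlane

theorem stmt10_general {X : Type*} [NormedAddCommGroup X] [InnerProductSpace ℂ X]
    (hdim : Module.finrank ℂ X = 2)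
    (A : X → X)
    (hAadd : ∀ x y, A (x + y) = A x + A y)
    (hAsmul : ∀ (c : ℂ) (x : X), A (c • x) = (conj c) • A x)
    (hAisom : ∀ x, ‖A x‖ = ‖x‖)
    (ψp ψm : ℝ → X) (hcp : Continuous ψp) (hcm : Continuous ψm)
    (hnp : ∀ θ, ‖ψp θ‖ = 1) (hnm : ∀ θ, ‖ψm θ‖ = 1)
    (hAp : ∀ θ, A (ψp θ) = ψp θ) (hAm : ∀ θ, A (ψm θ) = ψm θ)
    (horth : ∀ θ, (inner ℂ (ψp θ) (ψm θ) : ℂ) = 0)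
    (hrel : ∀ θ, ψp (θ + Real.pi) = ψm θ ∨ ψp (θ + Real.pi) = -ψm θ) :
    ∀ θ : ℝ, ψp (θ + 2 * Real.pi) = -ψp θ := by
  have hreal : ∀ x ∈ Function.fixedPoints A, ∀ y ∈ Function.fixedPoints A,
      (inner ℂ x y).im = 0 :=
    fun _ hx _ hy => im_inner_eq_zero_of_conjLinear_isometry hAadd hAsmul hAisom hx hy
  have hframe := reCoordDet_eq_one_of_continuous hdim hreal hcp hcm hAp hAm hnp hnm horth 0
  set s : ℝ → ℝ := fun θ => (inner ℂ (ψm θ) (ψp (θ + Real.pi))).re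
  have hs : ∀ θ, ψp (θ + Real.pi) = (s θ : ℂ) • ψm θ ∧ s θ ^ 2 = 1 :=
    fun θ => eq_re_inner_smul_and_sq_eq_one_of_eq_or_eq_neg (hnm θ) (hrel θ)
  have hsπ : ∀ θ, s (θ + Real.pi) = s θ :=
    fun θ => (by fun_prop : Continuous s).apply_eq_of_sq_eq_one (fun θ => (hs θ).2) _ _
  set t : ℝ → ℝ := fun θ => (inner ℂ (ψp θ) (ψm (θ + Real.pi))).re
  have ht : ∀ θ, ψm (θ + Real.pi) = (t θ : ℂ) • ψp θ := fun θ =>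
    eq_re_inner_smul_of_inner_eq_zero hdim
      (orthonormal_pair (hnp θ) (hnp _) (by rw [(hs θ).1, inner_smul_right, horth, mul_zero]))
      (horth _) (hreal _ (hAp θ) _ (hAm _))
  have hst : ∀ θ, s θ * t θ = -1 := by
    intro θ
    have h := hframe (θ + Real.pi)
    rwa [(hs θ).1, ht θ, reCoordDet_smul_smul, reCoordDet_swap, hframe θ, mul_neg_one,
      neg_eq_iff_eq_neg] at h
  intro θ
  calc ψp (θ + 2 * Real.pi) = ψp (θ + Real.pi + Real.pi) := by ring_nf
    _ = ((s θ * t θ : ℝ) : ℂ) • ψp θ := by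
      rw [(hs _).1, hsπ, ht, smul_smul, Complex.ofReal_mul]
    _ = -ψp θ := by rw [hst, Complex.ofReal_neg, Complex.ofReal_one, neg_one_smul]

/-- Berry phase around a nondegenerate conical point: the phase-fixed limiting
eigenvector sections `ψ⁺, ψ⁻` of the two cone branches satisfy
`ψ⁺(θ + 2π) = −ψ⁺(θ)`. -/
theorem stmt10 {X : Type*} [NormedAddCommGroup X] [InnerProductSpace ℂ X]
    (hdim : Module.finrank ℂ X = 2)
    (A : X → X)
    (hAadd : ∀ x y, A (x + y) = A x + A y)
    (hAsmul : ∀ (c : ℂ) (x : X), A (c • x) = (conj c) • A x)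
    (hAisom : ∀ x, ‖A x‖ = ‖x‖)
    (hAinv : ∀ x, A (A x) = x)
    (ψp ψm : ℝ → X) (hcp : Continuous ψp) (hcm : Continuous ψm)
    (hnp : ∀ θ, ‖ψp θ‖ = 1) (hnm : ∀ θ, ‖ψm θ‖ = 1)
    (hAp : ∀ θ, A (ψp θ) = ψp θ) (hAm : ∀ θ, A (ψm θ) = ψm θ)
    (horth : ∀ θ, (inner ℂ (ψp θ) (ψm θ) : ℂ) = 0)
    (hrel : ∀ θ, ψp (θ + Real.pi) = ψm θ ∨ ψp (θ + Real.pi) = -ψm θ) :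
    ∀ θ : ℝ, ψp (θ + 2 * Real.pi) = -ψp θ :=
  stmt10_general hdim A hAadd hAsmul hAisom ψp ψm hcp hcm hnp hnm hAp hAm horth hrel
end

section
/- Let X be a 2-dimensional complex inner product space and A : X → X a conjugate-linear isometric involution. Then there exists ψ ∈ X such that {ψ, A(ψ)} is an orthonormal basis of X. -/
/-!
Fixed vectors of `A` are easy to produce: `z + A z` is fixed, and if it vanishes then `I • z` is.
Since `⟪A x, A y⟫ = ⟪y, x⟫` (polarization), the orthogonal complement of a fixed vector is
`A`-invariant, so `X` has an orthonormal basis `e₁, e₂` of fixed vectors. Then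
`ψ = (e₁ + I • e₂) / √2` works, as `A ψ = (e₁ - I • e₂) / √2`.
-/

open ComplexConjugate
open scoped InnerProductSpace

section ConjLinear

variable {𝕜 E F : Type*} [RCLike 𝕜] [NormedAddCommGroup E] [InnerProductSpace 𝕜 E]
  [NormedAddCommGroup F] [InnerProductSpace 𝕜 F]

theorem LinearIsometry.inner_map_map_of_starRingEnd (A : E →ₗᵢ⋆[𝕜] F) (x y : E) :
    ⟪A x, A y⟫_𝕜 = ⟪y, x⟫_𝕜 := by
  have hnorm : ∀ c : 𝕜, ‖A x + c • A y‖ = ‖x + conj c • y‖ := fun c => by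
    rw [← A.norm_map, map_add, map_smulₛₗ, RCLike.conj_conj]
  rw [← inner_conj_symm y x, inner_eq_sum_norm_sq_div_four, inner_eq_sum_norm_sq_div_four]
  have h1 := hnorm 1
  have h2 := hnorm (-1)
  have h3 := hnorm (-RCLike.I)
  have h4 := hnorm RCLike.I
  simp only [one_smul, map_one, neg_smul, ← sub_eq_add_neg, map_neg, RCLike.conj_I, neg_neg]
    at h1 h2 h3 h4
  rw [h1, h2, h3, h4]
  simp only [map_div₀, map_add, map_sub, map_mul, map_pow, RCLike.conj_ofReal, RCLike.conj_I,
    map_ofNat]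
  ring

theorem LinearIsometry.map_mem_orthogonal_singleton_of_fixed (A : E →ₗᵢ⋆[𝕜] E) {e : E}
    (he : A e = e) {x : E} (hx : x ∈ (𝕜 ∙ e)ᗮ) : A x ∈ (𝕜 ∙ e)ᗮ := by
  rw [Submodule.mem_orthogonal_singleton_iff_inner_right] at hx ⊢
  rw [← he, A.inner_map_map_of_starRingEnd, ← inner_conj_symm, hx, map_zero]

end ConjLinear

section Fixed

variable {X : Type*}

theorem exists_ne_zero_fixed_of_involutive [AddCommGroup X] [Module ℂ X] (A : X →ₗ⋆[ℂ] X)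
    (hA : Function.Involutive A) {K : Submodule ℂ X} (hK : ∀ x ∈ K, A x ∈ K) (hK0 : K ≠ ⊥) :
    ∃ w ∈ K, w ≠ 0 ∧ A w = w := by
  obtain ⟨z, hzK, hz0⟩ := Submodule.exists_mem_ne_zero_of_ne_bot hK0
  by_cases h : z + A z = 0
  · refine ⟨Complex.I • z, K.smul_mem _ hzK, smul_ne_zero Complex.I_ne_zero hz0, ?_⟩
    rw [map_smulₛₗ, Complex.conj_I, eq_neg_of_add_eq_zero_right h, smul_neg, neg_smul, neg_neg]
  · exact ⟨z + A z, K.add_mem hzK (hK z hzK), h, by rw [map_add, hA, add_comm]⟩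

theorem exists_norm_eq_one_fixed_of_involutive [NormedAddCommGroup X] [InnerProductSpace ℂ X]
    (A : X →ₗ⋆[ℂ] X) (hA : Function.Involutive A) {K : Submodule ℂ X}
    (hK : ∀ x ∈ K, A x ∈ K) (hK0 : K ≠ ⊥) : ∃ e ∈ K, ‖e‖ = 1 ∧ A e = e := by
  obtain ⟨w, hwK, hw0, hwA⟩ := exists_ne_zero_fixed_of_involutive A hA hK hK0
  refine ⟨((‖w‖⁻¹ : ℝ) : ℂ) • w, K.smul_mem _ hwK, ?_, ?_⟩
  · rw [norm_smul, Complex.norm_real, norm_inv, norm_norm,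
      inv_mul_cancel₀ (norm_ne_zero_iff.mpr hw0)]
  · rw [map_smulₛₗ, Complex.conj_ofReal, hwA]

end Fixed

section TwoDim

variable {X : Type*} [NormedAddCommGroup X] [InnerProductSpace ℂ X]

theorem exists_orthonormal_pair_fixed (A : X →ₗᵢ⋆[ℂ] X) (hA : Function.Involutive A)
    (hdim : 2 ≤ Module.finrank ℂ X) :
    ∃ e₁ e₂ : X, Orthonormal ℂ ![e₁, e₂] ∧ A e₁ = e₁ ∧ A e₂ = e₂ := by
  have : FiniteDimensional ℂ X := .of_finrank_pos (by omega)
  have : Nontrivial X := Module.nontrivial_of_finrank_pos (R := ℂ) (by omega)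
  obtain ⟨e₁, -, he₁, hAe₁⟩ := exists_norm_eq_one_fixed_of_involutive A.toLinearMap hA
    (K := ⊤) (fun _ _ => trivial) top_ne_bot
  have hline : (ℂ ∙ e₁) ≠ ⊤ := fun h => by
    have := congrArg (fun K : Submodule ℂ X => Module.finrank ℂ K) h
    simp only [finrank_span_singleton (norm_ne_zero_iff.mp (he₁.trans_ne one_ne_zero)),
      finrank_top] at this
    omega
  obtain ⟨e₂, he₂K, he₂, hAe₂⟩ := exists_norm_eq_one_fixed_of_involutive A.toLinearMap hA
    (fun x hx => A.map_mem_orthogonal_singleton_of_fixed hAe₁ hx)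
    (Submodule.orthogonal_eq_bot_iff.not.mpr hline)
  refine ⟨e₁, e₂, ?_, hAe₁, hAe₂⟩
  simp [he₁, he₂, Submodule.mem_orthogonal_singleton_iff_inner_right.mp he₂K]

theorem Orthonormal.inner_smul_add_smul_pair {e₁ e₂ : X} (he : Orthonormal ℂ ![e₁, e₂])
    (c a b : ℂ) :
    ⟪c • (e₁ + a • e₂), c • (e₁ + b • e₂)⟫_ℂ = conj c * c * (1 + conj a * b) := by
  have h := orthonormal_iff_ite.mp he
  have h₁₁ : ⟪e₁, e₁⟫_ℂ = 1 := by simpa using h 0 0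
  have h₁₂ : ⟪e₁, e₂⟫_ℂ = 0 := by simpa using h 0 1
  have h₂₁ : ⟪e₂, e₁⟫_ℂ = 0 := by simpa using h 1 0
  have h₂₂ : ⟪e₂, e₂⟫_ℂ = 1 := by simpa using h 1 1
  simp only [inner_smul_left, inner_smul_right, inner_add_left, inner_add_right,
    h₁₁, h₁₂, h₂₁, h₂₂]
  ring

theorem exists_orthonormal_pair_self_map (A : X →ₗᵢ⋆[ℂ] X) {e₁ e₂ : X}
    (he : Orthonormal ℂ ![e₁, e₂]) (hAe₁ : A e₁ = e₁) (hAe₂ : A e₂ = e₂) :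
    ∃ ψ : X, Orthonormal ℂ ![ψ, A ψ] := by
  set c : ℂ := (((√2)⁻¹ : ℝ) : ℂ)
  have hc : conj c = c := Complex.conj_ofReal _
  have hc2 : c * c * 2 = 1 := by
    simp only [c, ← Complex.ofReal_mul, ← mul_inv, Real.mul_self_sqrt zero_le_two]
    norm_num
  set ψ := c • (e₁ + Complex.I • e₂)
  have hAψ : A ψ = c • (e₁ + (-Complex.I) • e₂) := by
    rw [map_smulₛₗ, map_add, map_smulₛₗ, hc, hAe₁, hAe₂, Complex.conj_I]
  have hψψ : ⟪ψ, ψ⟫_ℂ = 1 := by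
    rw [he.inner_smul_add_smul_pair, hc, Complex.conj_I]
    linear_combination hc2 - c * c * Complex.I_sq
  have hψAψ : ⟪ψ, A ψ⟫_ℂ = 0 := by
    rw [hAψ, he.inner_smul_add_smul_pair, Complex.conj_I]
    linear_combination conj c * c * Complex.I_sq
  have hψ : ‖ψ‖ = 1 := by rw [@norm_eq_sqrt_re_inner ℂ, hψψ]; simp
  refine ⟨ψ, ?_⟩
  simp [hψ, hψAψ]

end TwoDim

/-- On a 2-dimensional complex inner product space, a conjugate-linear isometric
involution `A` admits an orthonormal basis of the form `{ψ, Aψ}`. -/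
theorem stmt12 {X : Type*} [NormedAddCommGroup X] [InnerProductSpace ℂ X]
    (hdim : Module.finrank ℂ X = 2)
    (A : X → X)
    (hAadd : ∀ x y, A (x + y) = A x + A y)
    (hAsmul : ∀ (c : ℂ) (x : X), A (c • x) = (conj c) • A x)
    (hAisom : ∀ x, ‖A x‖ = ‖x‖)
    (hAinv : ∀ x, A (A x) = x) :
    ∃ ψ : X, Orthonormal ℂ ![ψ, A ψ] ∧
      Submodule.span ℂ {ψ, A ψ} = ⊤ := by
  let A' : X →ₗᵢ⋆[ℂ] X :=
    { toFun := A, map_add' := hAadd, map_smul' := hAsmul, norm_map' := hAisom }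
  obtain ⟨e₁, e₂, he, hAe₁, hAe₂⟩ := exists_orthonormal_pair_fixed A' hAinv hdim.ge
  obtain ⟨ψ, hψ⟩ := exists_orthonormal_pair_self_map A' he hAe₁ hAe₂
  refine ⟨ψ, hψ, ?_⟩
  rw [← Matrix.range_cons_cons_empty ψ (A ψ) ![]]
  exact hψ.linearIndependent.span_eq_top_of_card_eq_finrank (by simp [hdim])
end

section
/- Let H : ℝ² → M_n(ℂ) be differentiable at 0 with H(k) Hermitian for every k. Let S ∈ M_n(ℂ) be unitary and Ŝ ∈ M₂(ℝ) be such that S·H(k)·S* = H(Ŝk) for all k in a neighborhood of 0. Let e ∈ ℝ² be an eigenvector of Ŝ with real eigenvalue μ, and let D ∈ M_n(ℂ) denote the directional derivative of H at 0 in the direction e. Then: (i) if μ = 1, D commutes with S, and hence D maps each eigenspace of S into itself; (ii) if μ ≠ 1, then for any vectors u, v ∈ ℂⁿ belonging to the same eigenspace of S (i.e., Su = su and Sv = sv for some s ∈ ℂ), one has ⟨u, Dv⟩ = 0; hence D maps each eigenspace of S into its orthogonal complement. -/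
open Matrix

/-!
Differentiating `S H(k) Sᴴ = H(Ŝ k)` at `0` in the direction `e` gives `S D Sᴴ = μ D`, i.e.
`S D = μ D S` by unitarity. For `μ = 1` this says that `D` commutes with `S`. Otherwise, for
`u`, `v` in the `s`-eigenspace of `S`, unitarity gives `⟨u, D v⟩ = ⟨S u, S D v⟩ = μ |s|² ⟨u, D v⟩`,
and `|s| = 1` because `s` is an eigenvalue of a unitary matrix, so `⟨u, D v⟩ = 0`.
-/

section EntrywiseDeriv

variable (𝕜 : Type*) [NontriviallyNormedField 𝕜]
  {E : Type*} [NormedAddCommGroup E] [NormedSpace 𝕜 E]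
  {F : Type*} [NormedAddCommGroup F] [NormedSpace 𝕜 F]
  {𝔸 : Type*} [NormedCommRing 𝔸] [NormedAlgebra 𝕜 𝔸]
  {l m n o : Type*}

noncomputable def entrywiseFDeriv (H : E → Matrix m n 𝔸) (x v : E) : Matrix m n 𝔸 :=
  Matrix.of fun i j => fderiv 𝕜 (fun k => H k i j) x v

variable {𝕜}

theorem entrywiseFDeriv_smul (H : E → Matrix m n 𝔸) (x : E) (c : 𝕜) (v : E) :
    entrywiseFDeriv 𝕜 H x (c • v) = c • entrywiseFDeriv 𝕜 H x v := by
  ext i j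
  simp [entrywiseFDeriv]

theorem entrywiseFDeriv_congr {H G : E → Matrix m n 𝔸} {x : E} (h : H =ᶠ[nhds x] G) (v : E) :
    entrywiseFDeriv 𝕜 H x v = entrywiseFDeriv 𝕜 G x v := by
  ext i j
  simp only [entrywiseFDeriv, of_apply]
  rw [Filter.EventuallyEq.fderiv_eq (h.mono fun k hk => congrFun (congrFun hk i) j)]

theorem entrywiseFDeriv_comp_continuousLinearMap {H : F → Matrix m n 𝔸} (L : E →L[𝕜] F)
    {x : E} (hH : ∀ i j, DifferentiableAt 𝕜 (fun k => H k i j) (L x)) (v : E) :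
    entrywiseFDeriv 𝕜 (fun k => H (L k)) x v = entrywiseFDeriv 𝕜 H (L x) (L v) := by
  ext i j
  have hchain := fderiv_comp x (hH i j) L.differentiableAt
  simp only [entrywiseFDeriv, of_apply]
  rw [show (fun k => H (L k) i j) = (fun k => H k i j) ∘ L from rfl, hchain]
  simp

theorem entrywiseFDeriv_mul_mul [Fintype m] [Fintype n] {H : E → Matrix m n 𝔸} {x : E}
    (hH : ∀ i j, DifferentiableAt 𝕜 (fun k => H k i j) x)
    (A : Matrix l m 𝔸) (B : Matrix n o 𝔸) (v : E) :
    entrywiseFDeriv 𝕜 (fun k => A * H k * B) x v = A * entrywiseFDeriv 𝕜 H x v * B := by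
  ext i j
  have hentry : HasFDerivAt (fun k => (A * H k * B) i j)
      (∑ b, ∑ a, B b j • A i a • fderiv 𝕜 (fun k => H k a b) x) x := by
    simp only [mul_apply, Finset.sum_mul]
    exact HasFDerivAt.fun_sum fun b _ => HasFDerivAt.fun_sum fun a _ =>
      ((hH a b).hasFDerivAt.const_mul (A i a)).mul_const (B b j)
  simp only [entrywiseFDeriv, of_apply]
  rw [hentry.fderiv]
  simp only [mul_apply, Finset.sum_mul, _root_.sum_apply, _root_.smul_apply, smul_eq_mul,
    of_apply]
  exact Finset.sum_congr rfl fun b _ => Finset.sum_congr rfl fun a _ => by ring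

end EntrywiseDeriv

section TwistedCommutation

variable {R : Type*} [CommRing R] {n : Type*} [Fintype n]

theorem mulVec_mulVec_eq_smul_of_mul_comm {S D : Matrix n n R} (h : D * S = S * D) {s : R}
    {v : n → R} (hv : S *ᵥ v = s • v) : S *ᵥ D *ᵥ v = s • D *ᵥ v := by
  rw [mulVec_mulVec, ← h, ← mulVec_mulVec, hv, mulVec_smul]

variable [StarRing R] [DecidableEq n]

theorem mul_eq_smul_mul_of_mul_mul_conjTranspose_eq_smul {S D : Matrix n n R} {c : R}
    (hS : Sᴴ * S = 1) (h : S * D * Sᴴ = c • D) : S * D = c • (D * S) :=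
  calc S * D = S * D * (Sᴴ * S) := by rw [hS, mul_one]
    _ = c • (D * S) := by rw [← mul_assoc, h, smul_mul_assoc]

theorem star_mulVec_dotProduct_mulVec {S : Matrix n n R} (hS : Sᴴ * S = 1) (u v : n → R) :
    star (S *ᵥ u) ⬝ᵥ S *ᵥ v = star u ⬝ᵥ v := by
  rw [star_mulVec, ← dotProduct_mulVec, mulVec_mulVec, hS, one_mulVec]

variable [PartialOrder R] [StarOrderedRing R] [NoZeroDivisors R]

theorem star_mul_self_eq_one_of_mulVec_eq_smul {S : Matrix n n R} (hS : Sᴴ * S = 1) {s : R}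
    {u : n → R} (hu0 : u ≠ 0) (hu : S *ᵥ u = s • u) : star s * s = 1 := by
  have hnorm := star_mulVec_dotProduct_mulVec hS u u
  rw [hu, star_smul, smul_dotProduct, dotProduct_smul, smul_smul, smul_eq_mul] at hnorm
  have hfac : (star s * s - 1) * (star u ⬝ᵥ u) = 0 := by rw [sub_mul, hnorm, one_mul, sub_self]
  exact sub_eq_zero.mp <|
    (mul_eq_zero.mp hfac).resolve_right (dotProduct_star_self_eq_zero.not.mpr hu0)

theorem star_dotProduct_mulVec_eq_zero_of_mul_eq_smul_mul {S D : Matrix n n R} {c : R}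
    (hS : Sᴴ * S = 1) (hSD : S * D = c • (D * S)) (hc : c ≠ 1) {s : R} {u v : n → R}
    (hu : S *ᵥ u = s • u) (hv : S *ᵥ v = s • v) : star u ⬝ᵥ D *ᵥ v = 0 := by
  rcases eq_or_ne u 0 with rfl | hu0
  · simp
  have hs := star_mul_self_eq_one_of_mulVec_eq_smul hS hu0 hu
  set x := star u ⬝ᵥ D *ᵥ v
  have hx : x = c * x :=
    calc x = star (S *ᵥ u) ⬝ᵥ S *ᵥ D *ᵥ v := (star_mulVec_dotProduct_mulVec hS u _).symm
      _ = star (s • u) ⬝ᵥ c • D *ᵥ (s • v) := by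
        rw [hu, mulVec_mulVec, hSD, smul_mulVec, ← mulVec_mulVec, hv]
      _ = c * (star s * s) * x := by
        simp only [star_smul, mulVec_smul, smul_dotProduct, dotProduct_smul, smul_eq_mul, x]
        ring
      _ = c * x := by rw [hs, mul_one]
  have hfac : (c - 1) * x = 0 := by rw [sub_mul, ← hx, one_mul, sub_self]
  exact (mul_eq_zero.mp hfac).resolve_left (sub_ne_zero.mpr hc)

end TwistedCommutation

theorem stmt13_general {n : ℕ} (H : (Fin 2 → ℝ) → Matrix (Fin n) (Fin n) ℂ)
    (hdiff : ∀ i j, DifferentiableAt ℝ (fun k => H k i j) 0)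
    (S : Matrix (Fin n) (Fin n) ℂ) (hS1 : Sᴴ * S = 1)
    (Shat : Matrix (Fin 2) (Fin 2) ℝ)
    (hcov : ∀ᶠ k in nhds (0 : Fin 2 → ℝ), S * H k * Sᴴ = H (Shat.mulVec k))
    (e : Fin 2 → ℝ) (μ : ℝ) (he : Shat.mulVec e = μ • e)
    (D : Matrix (Fin n) (Fin n) ℂ)
    (hD : ∀ i j, D i j = fderiv ℝ (fun k => H k i j) 0 e) :
    (μ = 1 → D * S = S * D ∧
      ∀ (s : ℂ) (v : Fin n → ℂ), S.mulVec v = s • v →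
        S.mulVec (D.mulVec v) = s • D.mulVec v) ∧
    (μ ≠ 1 → ∀ (s : ℂ) (u v : Fin n → ℂ), S.mulVec u = s • u → S.mulVec v = s • v →
      dotProduct (star u) (D.mulVec v) = 0) := by
  have hDeriv : D = entrywiseFDeriv ℝ H 0 e := Matrix.ext hD
  let L := Shat.mulVecLin.toContinuousLinearMap
  have hconj : S * D * Sᴴ = (μ : ℂ) • D :=
    calc S * D * Sᴴ = entrywiseFDeriv ℝ (fun k => S * H k * Sᴴ) 0 e := by
          rw [hDeriv, entrywiseFDeriv_mul_mul hdiff]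
      _ = entrywiseFDeriv ℝ (fun k => H (L k)) 0 e := entrywiseFDeriv_congr hcov e
      _ = entrywiseFDeriv ℝ H 0 (μ • e) := by
          rw [entrywiseFDeriv_comp_continuousLinearMap L (by simpa [L] using hdiff)]
          simp [L, he]
      _ = (μ : ℂ) • D := by
          rw [entrywiseFDeriv_smul, hDeriv]
          exact RCLike.real_smul_eq_coe_smul μ _
  have htwist := mul_eq_smul_mul_of_mul_mul_conjTranspose_eq_smul hS1 hconj
  refine ⟨fun hμ => ?_, fun hμ s u v hu hv => ?_⟩
  · have hcomm : D * S = S * D := by rw [htwist, hμ, Complex.ofReal_one, one_smul]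
    exact ⟨hcomm, fun s v hv => mulVec_mulVec_eq_smul_of_mul_comm hcomm hv⟩
  · open scoped ComplexOrder in
    exact star_dotProduct_mulVec_eq_zero_of_mul_eq_smul_mul hS1 htwist (mod_cast hμ) hu hv

/-- Perturbation around a degenerate point with a unitary space symmetry `S`:
the directional derivative of the Bloch Hamiltonian along an eigendirection of
the induced quasimomentum action `Ŝ` either commutes with `S` (eigenvalue 1,
preserving eigenspaces of `S`) or maps each eigenspace of `S` into its
orthogonal complement (eigenvalue ≠ 1). -/
theorem stmt13 {n : ℕ} (H : (Fin 2 → ℝ) → Matrix (Fin n) (Fin n) ℂ)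
    (hdiff : ∀ i j, DifferentiableAt ℝ (fun k => H k i j) 0)
    (hherm : ∀ k, (H k).IsHermitian)
    (S : Matrix (Fin n) (Fin n) ℂ) (hS1 : Sᴴ * S = 1) (hS2 : S * Sᴴ = 1)
    (Shat : Matrix (Fin 2) (Fin 2) ℝ)
    (hcov : ∀ᶠ k in nhds (0 : Fin 2 → ℝ), S * H k * Sᴴ = H (Shat.mulVec k))
    (e : Fin 2 → ℝ) (he0 : e ≠ 0) (μ : ℝ) (he : Shat.mulVec e = μ • e)
    (D : Matrix (Fin n) (Fin n) ℂ)
    (hD : ∀ i j, D i j = fderiv ℝ (fun k => H k i j) 0 e) :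
    (μ = 1 → D * S = S * D ∧
      ∀ (s : ℂ) (v : Fin n → ℂ), S.mulVec v = s • v →
        S.mulVec (D.mulVec v) = s • D.mulVec v) ∧
    (μ ≠ 1 → ∀ (s : ℂ) (u v : Fin n → ℂ), S.mulVec u = s • u → S.mulVec v = s • v →
      dotProduct (star u) (D.mulVec v) = 0) :=
  stmt13_general H hdiff S hS1 Shat hcov e μ he D hD
end
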